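/- Let f be a Lipschitz function on the torus 𝕋ⁿ for some n ∈ ℕ. For any δ > 0 and any non-resonant vector ω ∈ ℝⁿ (i.e. ω·k ≠ 0 for all k ∈ ℤⁿ \ {0}), there exists T₀ > 0 such that for every T ≥ T₀ one has |(1/T)∫₀^T f(x₀ + ωt) dt − ⟨f⟩| ≤ δ uniformly in x₀ ∈ 𝕋ⁿ, where ⟨f⟩ = ∫_{𝕋ⁿ} f(x) dx is the average of f with respect to the normalized Haar measure on 𝕋ⁿ. -/

import Mathlib

/-!
Weyl's argument. The time average over `[0, T]` along the flow and the space average are both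
1-Lipschitz in `g` for the sup norm, so the continuous `g` whose time averages converge to the
space average uniformly in the starting point form a closed subspace of `C(𝕋ᵈ, ℂ)`. Along the flow
the character `e_k` is the pure oscillation `e_k(x) e^{2πi (k·ω) t}`, whose average over `[0, T]`
is `O(1/T)` as soon as `k·ω ≠ 0`, i.e. for every `k ≠ 0` by non-resonance; so all characters lie
in that subspace. Trigonometric polynomials are dense (Stone–Weierstrass), hence the subspace is
everything, and a Lipschitz `f` is in particular continuous.
-/

open MeasureTheory Filter Topology UnitAddTorus

noncomputable section

theorem isClosed_setOf_tendstoUniformly_of_lipschitzWith {ι X α E : Type*}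
    [PseudoMetricSpace X] [PseudoMetricSpace E] {l : Filter ι} {F : ι → X → α → E}
    {f : X → α → E} (hF : ∀ i a, LipschitzWith 1 (F i · a)) (hf : ∀ a, LipschitzWith 1 (f · a)) :
    IsClosed {x | TendstoUniformly (F · x) (f x) l} := by
  refine isClosed_of_closure_subset fun x hx => Metric.tendstoUniformly_iff.mpr fun ε hε => ?_
  obtain ⟨y, hy, hxy⟩ := Metric.mem_closure_iff.mp hx (ε / 3) (by positivity)
  filter_upwards [Metric.tendstoUniformly_iff.mp hy (ε / 3) (by positivity)] with i hi a
  have hfxy := (hf a).dist_le_mul x y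
  have hFxy := (hF i a).dist_le_mul x y
  rw [NNReal.coe_one, one_mul] at hfxy hFxy
  calc dist (f x a) (F i x a)
      ≤ dist (f x a) (f y a) + dist (f y a) (F i y a) + dist (F i y a) (F i x a) :=
        dist_triangle4 _ _ _ _
    _ < ε / 3 + ε / 3 + ε / 3 := by
        gcongr
        · exact hfxy.trans_lt hxy
        · exact hi a
        · exact dist_comm (F i y a) _ ▸ hFxy.trans_lt hxy
    _ = ε := by ring

theorem ContinuousMap.integrable {X E : Type*} [TopologicalSpace X] [CompactSpace X]
    [MeasurableSpace X] [OpensMeasurableSpace X] [NormedAddCommGroup E] (μ : Measure X)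
    [IsFiniteMeasure μ] (g : C(X, E)) : Integrable g μ :=
  g.continuous.integrable_of_hasCompactSupport (.of_compactSpace g)

theorem ContinuousMap.norm_integral_le_norm {X E : Type*} [TopologicalSpace X] [CompactSpace X]
    [MeasurableSpace X] [NormedAddCommGroup E] [NormedSpace ℝ E] (μ : Measure X)
    [IsProbabilityMeasure μ] (g : C(X, E)) : ‖∫ x, g x ∂μ‖ ≤ ‖g‖ := by
  simpa using norm_integral_le_of_norm_le_const (μ := μ) (.of_forall g.norm_coe_le_norm)

theorem tendstoUniformly_atTop_of_norm_sub_le_div {α E : Type*} [SeminormedAddCommGroup E]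
    {F : ℝ → α → E} {f : α → E} (C : ℝ) (h : ∀ T > 0, ∀ x, ‖F T x - f x‖ ≤ C / T) :
    TendstoUniformly F f atTop := by
  refine Metric.tendstoUniformly_iff.mpr fun ε hε => ?_
  have hC : Tendsto (fun T : ℝ => C / T) atTop (𝓝 0) := tendsto_const_nhds.div_atTop tendsto_id
  filter_upwards [hC.eventually (gt_mem_nhds hε), eventually_gt_atTop 0] with T hCT hT x
  rw [dist_comm, dist_eq_norm]
  exact (h T hT x).trans_lt hCT

theorem norm_integral_exp_mul_I_le {a : ℝ} (ha : a ≠ 0) (T : ℝ) :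
    ‖∫ t in (0 : ℝ)..T, Complex.exp (a * Complex.I * t)‖ ≤ 2 / |a| := by
  have hc : (a : ℂ) * Complex.I ≠ 0 := mul_ne_zero (mod_cast ha) Complex.I_ne_zero
  have hnorm (s : ℝ) : ‖Complex.exp (a * Complex.I * s)‖ = 1 := by
    rw [mul_right_comm, ← Complex.ofReal_mul, Complex.norm_exp_ofReal_mul_I]
  rw [integral_exp_mul_complex hc, norm_div, norm_mul, Complex.norm_I, mul_one, Complex.norm_real,
    Real.norm_eq_abs]
  gcongr
  exact (norm_sub_le _ _).trans_eq (by rw [hnorm, hnorm, one_add_one_eq_two])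

instance : IsProbabilityMeasure (volume : Measure UnitAddCircle) := ⟨by simp⟩

variable {d : Type*}

def linearFlow (ω : d → ℝ) (x : UnitAddTorus d) (t : ℝ) : UnitAddTorus d :=
  fun i => x i + ((t * ω i : ℝ) : UnitAddCircle)

theorem continuous_linearFlow (ω : d → ℝ) (x : UnitAddTorus d) : Continuous (linearFlow ω x) := by
  unfold linearFlow
  fun_prop

theorem intervalIntegrable_comp_linearFlow (ω : d → ℝ) (x : UnitAddTorus d)
    (g : C(UnitAddTorus d, ℂ)) (a b : ℝ) :
    IntervalIntegrable (fun t => g (linearFlow ω x t)) volume a b :=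
  (g.continuous.comp (continuous_linearFlow ω x)).intervalIntegrable a b

-- `(T : ℂ)⁻¹ = 0` at `T = 0`, so `norm_timeAverage_le` needs no hypothesis on `T`.
def timeAverage (ω : d → ℝ) (x : UnitAddTorus d) (T : ℝ) : C(UnitAddTorus d, ℂ) →ₗ[ℂ] ℂ where
  toFun g := (T : ℂ)⁻¹ * ∫ t in (0 : ℝ)..T, g (linearFlow ω x t)
  map_add' g h := by
    simp only [ContinuousMap.add_apply]
    rw [intervalIntegral.integral_add (intervalIntegrable_comp_linearFlow ..)
      (intervalIntegrable_comp_linearFlow ..), mul_add]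
  map_smul' c g := by
    simp only [ContinuousMap.smul_apply, smul_eq_mul, intervalIntegral.integral_const_mul,
      RingHom.id_apply]
    ring

theorem norm_timeAverage_le (ω : d → ℝ) (x : UnitAddTorus d) (T : ℝ) (g : C(UnitAddTorus d, ℂ)) :
    ‖timeAverage ω x T g‖ ≤ ‖g‖ := by
  have hint : ‖∫ t in (0 : ℝ)..T, g (linearFlow ω x t)‖ ≤ ‖g‖ * |T - 0| :=
    intervalIntegral.norm_integral_le_of_norm_le_const fun t _ => g.norm_coe_le_norm _
  change ‖(T : ℂ)⁻¹ * _‖ ≤ _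
  rw [norm_mul, norm_inv, Complex.norm_real, Real.norm_eq_abs]
  rcases eq_or_ne T 0 with rfl | hT
  · simp
  · calc |T|⁻¹ * ‖_‖ ≤ |T|⁻¹ * (‖g‖ * |T - 0|) := by gcongr
      _ = ‖g‖ := by rw [sub_zero]; field_simp

theorem timeAverage_one (ω : d → ℝ) (x : UnitAddTorus d) {T : ℝ} (hT : T ≠ 0) :
    timeAverage ω x T 1 = 1 := by
  simp [timeAverage, hT]

variable [Fintype d]

theorem integral_mFourier_of_ne_zero {k : d → ℤ} (hk : k ≠ 0) : ∫ y, mFourier k y = 0 := by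
  obtain ⟨i, hi⟩ := Function.ne_iff.mp hk
  rw [volume_pi, show ⇑(mFourier k) = fun y => ∏ i, fourier (k i) (y i) from rfl,
    integral_fintype_prod_eq_prod (fun i z => fourier (k i) z)]
  exact Finset.prod_eq_zero (Finset.mem_univ i)
    (integral_eq_zero_of_add_right_eq_neg (fourier_add_half_inv_index hi one_pos))

theorem mFourier_linearFlow (ω : d → ℝ) (k : d → ℤ) (x : UnitAddTorus d) (t : ℝ) :
    mFourier k (linearFlow ω x t) =
      mFourier k x * Complex.exp (((2 * Real.pi * ∑ i, k i * ω i : ℝ) : ℂ) * Complex.I * t) := by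
  have hfourier (i : d) : fourier (k i) (linearFlow ω x t i) =
      fourier (k i) (x i) * Complex.exp (2 * Real.pi * Complex.I * k i * (t * ω i : ℝ)) := by
    rw [linearFlow, fourier_apply, zsmul_add, AddCircle.toCircle_add, Circle.coe_mul,
      ← fourier_apply, ← fourier_apply, fourier_coe_apply, Complex.ofReal_one, div_one]
  simp only [mFourier, ContinuousMap.coe_mk, hfourier, Finset.prod_mul_distrib, ← Complex.exp_sum]
  congr 2
  push_cast
  rw [Finset.mul_sum, Finset.sum_mul, Finset.sum_mul]
  exact Finset.sum_congr rfl fun i _ => by ring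

theorem norm_mFourier_apply (k : d → ℤ) (x : UnitAddTorus d) : ‖mFourier k x‖ = 1 := by
  simp [mFourier, fourier_apply, norm_prod, Circle.norm_coe]

theorem norm_timeAverage_mFourier_le {ω : d → ℝ} {k : d → ℤ} (hk : ∑ i, k i * ω i ≠ 0)
    (x : UnitAddTorus d) {T : ℝ} (hT : 0 < T) :
    ‖timeAverage ω x T (mFourier k)‖ ≤ 2 / |2 * Real.pi * ∑ i, k i * ω i| / T := by
  have ha : 2 * Real.pi * ∑ i, k i * ω i ≠ 0 := mul_ne_zero (by positivity) hk
  change ‖(T : ℂ)⁻¹ * ∫ t in (0 : ℝ)..T, mFourier k (linearFlow ω x t)‖ ≤ _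
  simp_rw [mFourier_linearFlow, intervalIntegral.integral_const_mul]
  rw [norm_mul, norm_mul, norm_mFourier_apply, one_mul, norm_inv, Complex.norm_real,
    Real.norm_eq_abs, abs_of_pos hT, inv_mul_eq_div]
  gcongr
  exact norm_integral_exp_mul_I_le ha T

def uniformlyAveragingSubmodule (ω : d → ℝ) : Submodule ℂ C(UnitAddTorus d, ℂ) where
  carrier := {g | TendstoUniformly (fun T x => timeAverage ω x T g) (fun _ => ∫ y, g y) atTop}
  zero_mem' := by
    simpa using tendsto_const_nhds.tendstoUniformly_const
  add_mem' {g h} hg hh := by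
    simp only [Set.mem_ofPred_eq, map_add, ContinuousMap.add_apply,
      integral_add (g.integrable volume) (h.integrable volume)]
    exact hg.add hh
  smul_mem' c g hg := by
    simp only [Set.mem_ofPred_eq, map_smul, ContinuousMap.smul_apply, integral_smul]
    exact (uniformContinuous_const_smul c).comp_tendstoUniformly hg

theorem isClosed_uniformlyAveragingSubmodule (ω : d → ℝ) :
    IsClosed (uniformlyAveragingSubmodule ω : Set C(UnitAddTorus d, ℂ)) := by
  refine isClosed_setOf_tendstoUniformly_of_lipschitzWith (fun T x => ?_) fun _ => ?_
  · refine LipschitzWith.of_dist_le_mul fun g h => ?_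
    rw [NNReal.coe_one, one_mul, dist_eq_norm, dist_eq_norm, ← map_sub]
    exact norm_timeAverage_le ω x T (g - h)
  · refine LipschitzWith.of_dist_le_mul fun g h => ?_
    rw [NNReal.coe_one, one_mul, dist_eq_norm, dist_eq_norm,
      ← integral_sub (g.integrable volume) (h.integrable volume)]
    exact (g - h).norm_integral_le_norm volume

theorem mFourier_mem_uniformlyAveragingSubmodule {ω : d → ℝ}
    (hω : ∀ k : d → ℤ, k ≠ 0 → ∑ i, (k i : ℝ) * ω i ≠ 0) (k : d → ℤ) :
    mFourier k ∈ uniformlyAveragingSubmodule ω := by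
  rcases eq_or_ne k 0 with rfl | hk
  · refine tendstoUniformly_atTop_of_norm_sub_le_div 0 fun T hT x => ?_
    simp [mFourier_zero, timeAverage_one ω x hT.ne']
  · refine tendstoUniformly_atTop_of_norm_sub_le_div (2 / |2 * Real.pi * ∑ i, k i * ω i|)
      fun T hT x => ?_
    rw [integral_mFourier_of_ne_zero hk, sub_zero]
    exact norm_timeAverage_mFourier_le (hω k hk) x hT

theorem uniformlyAveragingSubmodule_eq_top {ω : d → ℝ}
    (hω : ∀ k : d → ℤ, k ≠ 0 → ∑ i, (k i : ℝ) * ω i ≠ 0) :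
    uniformlyAveragingSubmodule ω = ⊤ := by
  rw [eq_top_iff, ← span_mFourier_closure_eq_top]
  refine Submodule.topologicalClosure_minimal _ ?_ (isClosed_uniformlyAveragingSubmodule ω)
  exact Submodule.span_le.mpr
    (Set.range_subset_iff.mpr (mFourier_mem_uniformlyAveragingSubmodule hω))

end

theorem statement_7_general
    (n : ℕ)
    (f : (Fin n → AddCircle (1:ℝ)) → ℝ) (K : NNReal) (hf : LipschitzWith K f)
    (ω : Fin n → ℝ)
    (hω : ∀ k : Fin n → ℤ, k ≠ 0 → (∑ i, (k i : ℝ) * ω i) ≠ 0)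
    (δ : ℝ) (hδ : 0 < δ) :
    ∃ T₀ > (0:ℝ), ∀ T ≥ T₀, ∀ x₀ : Fin n → AddCircle (1:ℝ),
      |(1 / T) * (∫ t in (0:ℝ)..T, f (fun i => x₀ i + ((t * ω i : ℝ) : AddCircle (1:ℝ))))
        - ∫ x, f x| ≤ δ := by
  let F : C(UnitAddTorus (Fin n), ℂ) :=
    ⟨fun x => f x, Complex.continuous_ofReal.comp hf.continuous⟩
  have hF : F ∈ uniformlyAveragingSubmodule ω :=
    uniformlyAveragingSubmodule_eq_top hω ▸ Submodule.mem_top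
  obtain ⟨T₁, hT₁⟩ := eventually_atTop.mp (Metric.tendstoUniformly_iff.mp hF δ hδ)
  refine ⟨max T₁ 1, by positivity, fun T hT x₀ => ?_⟩
  have hcast : timeAverage ω x₀ T F - ∫ y, F y =
      ((1 / T * (∫ t in (0:ℝ)..T, f (linearFlow ω x₀ t)) - ∫ y, f y : ℝ) : ℂ) := by
    rw [Complex.ofReal_sub, Complex.ofReal_mul, one_div, Complex.ofReal_inv,
      ← integral_complex_ofReal, ← intervalIntegral.integral_ofReal]
    rfl
  have hclose := hT₁ T (le_of_max_le_left hT) x₀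
  rw [dist_comm, dist_eq_norm, hcast, Complex.norm_real, Real.norm_eq_abs] at hclose
  exact hclose.le

/-- Lemma 2.3, a version of the classical Weyl theorem.
Let f be a Lipschitz function on the torus 𝕋ⁿ = (ℝ/ℤ)ⁿ, equipped with its normalized
Haar measure, and let ω ∈ ℝⁿ be non-resonant (ω·k ≠ 0 for all k ∈ ℤⁿ \ {0}).  Then for
any δ > 0 there exists T₀ > 0 such that for all T ≥ T₀ and all x₀ ∈ 𝕋ⁿ,
|(1/T)∫₀^T f(x₀ + ωt) dt − ∫_{𝕋ⁿ} f| ≤ δ. -/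
theorem statement_7
    (n : ℕ) (hn : 0 < n)
    (f : (Fin n → AddCircle (1:ℝ)) → ℝ) (K : NNReal) (hf : LipschitzWith K f)
    (ω : Fin n → ℝ)
    (hω : ∀ k : Fin n → ℤ, k ≠ 0 → (∑ i, (k i : ℝ) * ω i) ≠ 0)
    (δ : ℝ) (hδ : 0 < δ) :
    ∃ T₀ > (0:ℝ), ∀ T ≥ T₀, ∀ x₀ : Fin n → AddCircle (1:ℝ),
      |(1 / T) * (∫ t in (0:ℝ)..T, f (fun i => x₀ i + ((t * ω i : ℝ) : AddCircle (1:ℝ))))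
        - ∫ x, f x| ≤ δ :=
  statement_7_general n f K hf ω hω δ hδ
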